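/- Let n ≥ e^e be an integer, let p_1, …, p_r be distinct primes none of which divides n, and let TV_K := TV_{K_n} ⊗ V_{p_1} ⊗ ⋯ ⊗ V_{p_r}. Then Cond(TV_K) ≤ φ(n) · n^{0.2076} · ∏_{i=1}^r (2 + √p_i). -/

import Mathlib

open scoped Kronecker

/-- The Frobenius norm of a complex matrix: `√(∑_{i,j} |A_{ij}|²)`. -/
noncomputable def frobNorm {m n : Type*} [Fintype m] [Fintype n]
    (A : Matrix m n ℂ) : ℝ :=
  Real.sqrt (∑ i, ∑ j, ‖A i j‖ ^ 2)

/-- The condition number `Cond(A) = ‖A‖ · ‖A⁻¹‖` (Frobenius norm). -/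
noncomputable def condNum {n : Type*} [Fintype n] [DecidableEq n]
    (A : Matrix n n ℂ) : ℝ :=
  frobNorm A * frobNorm A⁻¹

/-- The iterated Kronecker product of the matrices `V i`, realized on the
canonical index set `∀ i, Fin (t i)`: its `(f, g)` entry is `∏ i, (V i) (f i) (g i)`. -/
noncomputable def kronProd {r : ℕ} {t : Fin r → ℕ}
    (V : ∀ i, Matrix (Fin (t i)) (Fin (t i)) ℂ) :
    Matrix (∀ i, Fin (t i)) (∀ i, Fin (t i)) ℂ :=
  Matrix.of fun f g => ∏ i, V i (f i) (g i)

/-- The matrix `V_p`: `[[1, √p],[1, −√p]]` if `p ≡ 2, 3 (mod 4)`, and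
`[[1, (1+√p)/2],[1, (1−√p)/2]]` if `p ≡ 1 (mod 4)`. -/
noncomputable def Vp (p : ℕ) : Matrix (Fin 2) (Fin 2) ℝ :=
  if p % 4 = 1 then
    !![1, (1 + Real.sqrt p) / 2; 1, (1 - Real.sqrt p) / 2]
  else
    !![1, Real.sqrt p; 1, -Real.sqrt p]

/-!
The condition number is multiplicative under Kronecker products, so each factor is bounded
separately. Let `V` be the Vandermonde matrix of the primitive `Q ^ (K + 1)`-th roots of unity.
Its entries have modulus one, so `‖V‖ = φ(Q ^ (K + 1))`. The entries of `Vᴴ * V` are Ramanujan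
sums, which gives `Vᴴ * V = Q ^ K • (Q • 1 - E)` with `E` the indicator matrix of congruence
modulo `Q ^ K`. From `E * E = (Q - 1) • E` one gets `(Vᴴ * V)⁻¹ = Q ^ (-(K + 1)) • (1 + E)`, hence
`‖V⁻¹‖ ^ 2 = tr (Vᴴ * V)⁻¹ = 2 * (Q - 1) / Q ≤ Q ^ (1 / 3)`. For a `2 × 2` matrix,
`Cond(A) = ‖A‖ ^ 2 / |det A|`, and for `V_p` this is `(p + 1) / √p` or `(p + 5) / (2 * √p)`.
-/

open Matrix

section FrobeniusNorm

variable {l m n o : Type*} [Fintype l] [Fintype m] [Fintype n] [Fintype o]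

lemma frobNorm_nonneg (A : Matrix m n ℂ) : 0 ≤ frobNorm A :=
  Real.sqrt_nonneg _

lemma frobNorm_sq (A : Matrix m n ℂ) : frobNorm A ^ 2 = ∑ i, ∑ j, ‖A i j‖ ^ 2 :=
  Real.sq_sqrt (by positivity)

lemma ofReal_frobNorm_sq (A : Matrix m n ℂ) : ((frobNorm A ^ 2 : ℝ) : ℂ) = (A * Aᴴ).trace := by
  simp [frobNorm_sq, trace, mul_apply, Complex.mul_conj, Complex.normSq_eq_norm_sq]

lemma frobNorm_smul (c : ℂ) (A : Matrix m n ℂ) : frobNorm (c • A) = ‖c‖ * frobNorm A := by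
  simp only [frobNorm, Matrix.smul_apply, smul_eq_mul, norm_mul, mul_pow, ← Finset.mul_sum]
  rw [Real.sqrt_mul (by positivity), Real.sqrt_sq (norm_nonneg c)]

lemma frobNorm_kronecker (A : Matrix l m ℂ) (B : Matrix n o ℂ) :
    frobNorm (A ⊗ₖ B) = frobNorm A * frobNorm B := by
  rw [frobNorm, frobNorm, frobNorm, ← Real.sqrt_mul (by positivity), Finset.sum_mul_sum]
  simp only [Fintype.sum_prod_type, kroneckerMap_apply, norm_mul, mul_pow, Finset.sum_mul_sum]

lemma frobNorm_map_ofReal_sq (A : Matrix m n ℝ) :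
    frobNorm (A.map Complex.ofReal) ^ 2 = ∑ i, ∑ j, A i j ^ 2 := by
  simp [frobNorm_sq, Complex.norm_real]

end FrobeniusNorm

section KronProd

variable {r : ℕ} {t : Fin r → ℕ}

lemma frobNorm_kronProd (V : ∀ i, Matrix (Fin (t i)) (Fin (t i)) ℂ) :
    frobNorm (kronProd V) = ∏ i, frobNorm (V i) := by
  simp only [frobNorm, kronProd, of_apply, norm_prod, ← Finset.prod_pow]
  rw [← Real.sqrt_prod _ fun i _ => by positivity]
  simp only [Fintype.prod_sum]

lemma kronProd_mul (V W : ∀ i, Matrix (Fin (t i)) (Fin (t i)) ℂ) :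
    kronProd V * kronProd W = kronProd fun i => V i * W i := by
  ext f g
  simp only [kronProd, mul_apply, of_apply, Fintype.prod_sum, Finset.prod_mul_distrib]

lemma kronProd_one : kronProd (fun i => (1 : Matrix (Fin (t i)) (Fin (t i)) ℂ)) = 1 := by
  ext f g
  simp [kronProd, one_apply, Finset.prod_boole, funext_iff]

lemma inv_kronProd {V : ∀ i, Matrix (Fin (t i)) (Fin (t i)) ℂ} (hV : ∀ i, IsUnit (V i).det) :
    (kronProd V)⁻¹ = kronProd fun i => (V i)⁻¹ := by
  refine inv_eq_left_inv ?_
  simp only [kronProd_mul, nonsing_inv_mul _ (hV _), kronProd_one]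

end KronProd

section ConditionNumber

variable {m n : Type*} [Fintype m] [Fintype n] [DecidableEq m] [DecidableEq n]

lemma condNum_nonneg (A : Matrix n n ℂ) : 0 ≤ condNum A :=
  mul_nonneg (frobNorm_nonneg _) (frobNorm_nonneg _)

lemma condNum_kronecker (A : Matrix m m ℂ) (B : Matrix n n ℂ) :
    condNum (A ⊗ₖ B) = condNum A * condNum B := by
  simp only [condNum, inv_kronecker, frobNorm_kronecker]
  ring

lemma condNum_kronProd {r : ℕ} {t : Fin r → ℕ} {V : ∀ i, Matrix (Fin (t i)) (Fin (t i)) ℂ}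
    (hV : ∀ i, IsUnit (V i).det) : condNum (kronProd V) = ∏ i, condNum (V i) := by
  simp only [condNum, inv_kronProd hV, frobNorm_kronProd, Finset.prod_mul_distrib]

lemma frobNorm_adjugate_fin_two (A : Matrix (Fin 2) (Fin 2) ℂ) :
    frobNorm A.adjugate = frobNorm A := by
  simp only [frobNorm, adjugate_fin_two, Fin.sum_univ_two, of_apply, cons_val', cons_val_zero,
    cons_val_one, empty_val', cons_val_fin_one, norm_neg]
  ring_nf

/-- For `2 × 2` matrices the adjugate has the same Frobenius norm, so `‖A⁻¹‖ = ‖A‖ / |det A|`. -/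
lemma condNum_fin_two (A : Matrix (Fin 2) (Fin 2) ℂ) : condNum A = frobNorm A ^ 2 / ‖A.det‖ := by
  rw [condNum, inv_def, Ring.inverse_eq_inv, frobNorm_smul, frobNorm_adjugate_fin_two, norm_inv]
  ring

lemma frobNorm_inv_sq (A : Matrix n n ℂ) : frobNorm A⁻¹ ^ 2 = ((Aᴴ * A)⁻¹.trace).re := by
  rw [Matrix.mul_inv_rev, ← conjTranspose_nonsing_inv, ← ofReal_frobNorm_sq, Complex.ofReal_re]

end ConditionNumber

lemma det_map_ofReal {n : Type*} [Fintype n] [DecidableEq n] (A : Matrix n n ℝ) :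
    (A.map Complex.ofReal).det = A.det :=
  (RingHom.map_det Complex.ofRealHom A).symm

section Vp

lemma det_Vp (p : ℕ) : (Vp p).det = if p % 4 = 1 then -√p else -(2 * √p) := by
  unfold Vp
  split_ifs <;> simp [det_fin_two] <;> ring

lemma frobNorm_Vp_sq (p : ℕ) :
    frobNorm ((Vp p).map Complex.ofReal) ^ 2 =
      if p % 4 = 1 then ((p : ℝ) + 5) / 2 else 2 * ((p : ℝ) + 1) := by
  have hp : √(p : ℝ) ^ 2 = p := Real.sq_sqrt p.cast_nonneg
  rw [frobNorm_map_ofReal_sq]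
  unfold Vp
  split_ifs <;> simp only [Fin.sum_univ_two, of_apply, cons_val', cons_val_zero, cons_val_one,
    empty_val', cons_val_fin_one]
  · linear_combination (1 / 2 : ℝ) * hp
  · linear_combination 2 * hp

lemma condNum_Vp_le (p : ℕ) : condNum ((Vp p).map Complex.ofReal) ≤ 2 + √p := by
  rw [condNum_fin_two, frobNorm_Vp_sq, det_map_ofReal, det_Vp, Complex.norm_real, Real.norm_eq_abs]
  rcases Nat.eq_zero_or_pos p with rfl | hp0
  · simp
  have hu : 1 ≤ √(p : ℝ) := Real.one_le_sqrt.2 (by exact_mod_cast hp0)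
  have hp : (p : ℝ) = √(p : ℝ) ^ 2 := (Real.sq_sqrt p.cast_nonneg).symm
  set u := √(p : ℝ)
  split_ifs
  · rw [abs_neg, abs_of_pos (by positivity), div_le_iff₀ (by positivity), hp]
    nlinarith
  · rw [abs_neg, abs_of_pos (by positivity), div_le_iff₀ (by positivity), hp]
    nlinarith

lemma isUnit_det_Vp {p : ℕ} (hp : p ≠ 0) : IsUnit ((Vp p).map Complex.ofReal).det := by
  have : (0 : ℝ) < √p := Real.sqrt_pos.2 (by exact_mod_cast Nat.pos_of_ne_zero hp)
  rw [isUnit_iff_ne_zero, det_map_ofReal, det_Vp, Complex.ofReal_ne_zero]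
  split_ifs <;> simp [this.ne']

end Vp

section RootsOfUnity

open Polynomial

lemma sum_nthRootsFinset_pow (N d : ℕ) :
    ∑ z ∈ nthRootsFinset N (1 : ℂ), z ^ d = if N ∣ d then (N : ℂ) else 0 := by
  obtain rfl | hN := N.eq_zero_or_pos
  · simp
  obtain ⟨η, hη⟩ : ∃ η : ℂ, IsPrimitiveRoot η N := ⟨_, Complex.isPrimitiveRoot_exp N hN.ne'⟩
  have himage : nthRootsFinset N (1 : ℂ) = (Finset.range N).image (η ^ ·) := by
    rw [nthRootsFinset_def, hη.nthRoots_eq (one_pow N)]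
    simp only [mul_one]
    rfl
  rw [himage, Finset.sum_image fun i hi j hj => hη.pow_inj (by simpa using hi) (by simpa using hj)]
  simp_rw [pow_right_comm η _ d]
  split_ifs with hd
  · simp [(hη.pow_eq_one_iff_dvd d).2 hd]
  · have hne : η ^ d ≠ 1 := mt (hη.pow_eq_one_iff_dvd d).1 hd
    rw [geom_sum_eq hne, ← pow_mul, mul_comm, pow_mul, hη.pow_eq_one, one_pow, sub_self,
      zero_div]

lemma primitiveRoots_prime_pow_succ {R : Type*} [CommRing R] [IsDomain R] [DecidableEq R] {Q : ℕ}
    (hQ : Q.Prime) (K : ℕ) :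
    primitiveRoots (Q ^ (K + 1)) R =
      nthRootsFinset (Q ^ (K + 1)) (1 : R) \ nthRootsFinset (Q ^ K) (1 : R) := by
  have := Fact.mk hQ
  ext z
  rw [Finset.mem_sdiff, mem_primitiveRoots (pow_pos hQ.pos _),
    mem_nthRootsFinset (pow_pos hQ.pos _), mem_nthRootsFinset (pow_pos hQ.pos _)]
  refine ⟨fun h => ⟨h.pow_eq_one, h.pow_ne_one_of_pos_of_lt (pow_ne_zero _ hQ.ne_zero)
    (pow_lt_pow_right₀ hQ.one_lt K.lt_succ_self)⟩, fun ⟨h1, h2⟩ => ?_⟩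
  rw [← orderOf_eq_prime_pow h2 h1]
  exact IsPrimitiveRoot.orderOf z

lemma sum_primitiveRoots_prime_pow_pow {Q : ℕ} (hQ : Q.Prime) (K d : ℕ) :
    ∑ z ∈ primitiveRoots (Q ^ (K + 1)) ℂ, z ^ d =
      (if Q ^ (K + 1) ∣ d then (Q : ℂ) ^ (K + 1) else 0) -
        if Q ^ K ∣ d then (Q : ℂ) ^ K else 0 := by
  have hsub : nthRootsFinset (Q ^ K) (1 : ℂ) ⊆ nthRootsFinset (Q ^ (K + 1)) 1 := by
    intro z hz
    rw [mem_nthRootsFinset (pow_pos hQ.pos _)] at hz ⊢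
    rw [pow_succ, pow_mul, hz, one_pow]
  rw [primitiveRoots_prime_pow_succ hQ, Finset.sum_sdiff_eq_sub hsub,
    sum_nthRootsFinset_pow, sum_nthRootsFinset_pow]
  push_cast
  rfl

lemma sum_comp_eq_sum_primitiveRoots {M : Type*} [AddCommMonoid M] {N : ℕ}
    {ζ : Fin N.totient → ℂ} (hζ : ∀ a, IsPrimitiveRoot (ζ a) N) (hinj : Function.Injective ζ)
    (f : ℂ → M) : ∑ a, f (ζ a) = ∑ z ∈ primitiveRoots N ℂ, f z := by
  obtain rfl | hN := N.eq_zero_or_pos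
  · have : IsEmpty (Fin (Nat.totient 0)) := by rw [Nat.totient_zero]; infer_instance
    simp [Finset.sum_of_isEmpty]
  have himage : Finset.univ.map ⟨ζ, hinj⟩ = primitiveRoots N ℂ := by
    refine Finset.eq_of_subset_of_card_le (fun z hz => ?_) ?_
    · obtain ⟨a, -, rfl⟩ := Finset.mem_map.1 hz
      exact (mem_primitiveRoots hN).2 (hζ a)
    · simp [Complex.card_primitiveRoots]
  rw [← himage, Finset.sum_map]
  rfl

lemma star_pow_mul_pow_of_pow_eq_one {z : ℂ} {N : ℕ} (hz : z ^ N = 1) (hN : N ≠ 0) {l : ℕ}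
    (hl : l ≤ N) (m : ℕ) : star (z ^ l) * z ^ m = z ^ (N - l + m) := by
  have hinv : z ^ (N - l) * z ^ l = 1 := by rw [← pow_add, Nat.sub_add_cancel hl, hz]
  rw [pow_add, eq_inv_of_mul_eq_one_left hinv, ← inv_pow,
    Complex.inv_eq_conj (Complex.norm_eq_one_of_pow_eq_one hz hN), star_pow, RCLike.star_def]

end RootsOfUnity

lemma Nat.dvd_sub_add_iff_modEq {N d l m : ℕ} (hd : d ∣ N) (hl : l ≤ N) :
    d ∣ N - l + m ↔ l ≡ m [MOD d] := by
  rw [← Int.natCast_dvd_natCast, Nat.modEq_iff_dvd, Nat.cast_add, Nat.cast_sub hl,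
    show (N : ℤ) - l + m = m - l + N by ring, dvd_add_left (Int.natCast_dvd_natCast.2 hd)]

lemma Nat.totient_finset_prod {ι : Type*} (s : Finset ι) (f : ι → ℕ)
    (hs : (s : Set ι).Pairwise fun i j => (f i).Coprime (f j)) :
    (∏ i ∈ s, f i).totient = ∏ i ∈ s, (f i).totient := by
  classical
  induction s using Finset.induction_on with
  | empty => simp
  | insert a s has ih =>
    rw [Finset.coe_insert, Set.pairwise_insert] at hs
    rw [Finset.prod_insert has, Finset.prod_insert has, Nat.totient_mul, ih hs.1]
    exact Nat.Coprime.prod_right fun i hi => (hs.2 _ hi (ne_of_mem_of_not_mem hi has).symm).1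

section ModEqMatrix

def modEqMatrix (t d : ℕ) : Matrix (Fin t) (Fin t) ℂ :=
  of fun l m => if (l : ℕ) ≡ m [MOD d] then 1 else 0

lemma conjTranspose_modEqMatrix (t d : ℕ) : (modEqMatrix t d)ᴴ = modEqMatrix t d := by
  ext l m
  simp [modEqMatrix, Nat.ModEq.comm]

lemma trace_modEqMatrix (t d : ℕ) : (modEqMatrix t d).trace = t := by
  simp [modEqMatrix, trace, Nat.ModEq.refl]

lemma modEqMatrix_mul_self {t d c : ℕ} (hd : 0 < d) (ht : t = d * c) :
    modEqMatrix t d * modEqMatrix t d = (c : ℂ) • modEqMatrix t d := by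
  have hcount (m : ℕ) : ∑ h : Fin t, (if (h : ℕ) ≡ m [MOD d] then (1 : ℂ) else 0) = c := by
    rw [Fin.sum_univ_eq_sum_range (fun h => if h ≡ m [MOD d] then (1 : ℂ) else 0), Finset.sum_boole,
      ← Nat.count_eq_card_filter_range, Nat.count_modEq_card _ hd, ht]
    simp [Nat.mul_div_cancel_left _ hd]
  ext l m
  simp only [modEqMatrix, mul_apply, of_apply, Matrix.smul_apply, smul_eq_mul, mul_ite, mul_one,
    mul_zero, ← ite_and]
  split_ifs with hlm
  · rw [← hcount m]
    exact Finset.sum_congr rfl fun h _ =>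
      if_congr ⟨And.left, fun hhm => ⟨hhm, hlm.trans hhm.symm⟩⟩ rfl rfl
  · exact Finset.sum_eq_zero fun h _ => if_neg fun ⟨hhm, hlh⟩ => hlm (hlh.trans hhm)

end ModEqMatrix

lemma inv_smul_sub_of_mul_self {n : Type*} [Fintype n] [DecidableEq n] {E : Matrix n n ℂ}
    {c s : ℂ} (hE : E * E = (c - 1) • E) (hsc : s * c ≠ 0) :
    (s • (c • 1 - E))⁻¹ = (s * c)⁻¹ • (1 + E) := by
  refine inv_eq_left_inv ?_
  have hprod : (1 + E) * (c • 1 - E) = c • 1 := by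
    rw [add_mul, one_mul, mul_sub, mul_smul_comm, mul_one, hE, sub_smul, one_smul]
    abel
  rw [Matrix.smul_mul, Matrix.mul_smul, hprod, smul_smul, smul_smul, mul_assoc,
    inv_mul_cancel₀ hsc, one_smul]

lemma frobNorm_vandermonde_of_norm_eq_one {n : ℕ} {v : Fin n → ℂ} (hv : ∀ i, ‖v i‖ = 1) :
    frobNorm (vandermonde v) = n := by
  simp [frobNorm, vandermonde_apply, hv]

section CyclotomicVandermonde

variable {Q K : ℕ} {ζ : Fin (Q ^ (K + 1)).totient → ℂ}

lemma conjTranspose_vandermonde_mul_self_of_isPrimitiveRoot (hQ : Q.Prime)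
    (hζ : ∀ a, IsPrimitiveRoot (ζ a) (Q ^ (K + 1))) (hinj : Function.Injective ζ) :
    (vandermonde ζ)ᴴ * vandermonde ζ = (Q : ℂ) ^ K • ((Q : ℂ) • 1 - modEqMatrix _ (Q ^ K)) := by
  have hN : Q ^ (K + 1) ≠ 0 := pow_ne_zero _ hQ.ne_zero
  have hlt (l : Fin (Q ^ (K + 1)).totient) : (l : ℕ) < Q ^ (K + 1) :=
    l.isLt.trans (Nat.totient_lt _ (Nat.one_lt_pow K.succ_ne_zero hQ.one_lt))
  ext l m
  have hmodEq : (l : ℕ) ≡ m [MOD Q ^ (K + 1)] ↔ l = m := by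
    rw [Nat.ModEq, Nat.mod_eq_of_lt (hlt l), Nat.mod_eq_of_lt (hlt m), Fin.val_inj]
  calc ((vandermonde ζ)ᴴ * vandermonde ζ) l m = ∑ a, ζ a ^ (Q ^ (K + 1) - l + m) := by
        simp only [mul_apply, conjTranspose_apply, vandermonde_apply]
        exact Finset.sum_congr rfl fun a _ =>
          star_pow_mul_pow_of_pow_eq_one (hζ a).pow_eq_one hN (hlt l).le m
    _ = (if l = m then (Q : ℂ) ^ (K + 1) else 0) -
          if (l : ℕ) ≡ m [MOD Q ^ K] then (Q : ℂ) ^ K else 0 := by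
        rw [sum_comp_eq_sum_primitiveRoots hζ hinj (· ^ (Q ^ (K + 1) - l + m)),
          sum_primitiveRoots_prime_pow_pow hQ]
        simp only [Nat.dvd_sub_add_iff_modEq dvd_rfl (hlt l).le,
          Nat.dvd_sub_add_iff_modEq (pow_dvd_pow Q K.le_succ) (hlt l).le, hmodEq]
    _ = _ := by
        simp only [Matrix.smul_apply, Matrix.sub_apply, one_apply, modEqMatrix, of_apply,
          smul_eq_mul]
        split_ifs <;> ring

lemma frobNorm_inv_vandermonde_of_isPrimitiveRoot (hQ : Q.Prime)
    (hζ : ∀ a, IsPrimitiveRoot (ζ a) (Q ^ (K + 1))) (hinj : Function.Injective ζ) :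
    frobNorm (vandermonde ζ)⁻¹ = √(2 * ((Q : ℝ) - 1) / Q) := by
  have hQ1 : ((Q - 1 : ℕ) : ℂ) = Q - 1 := by push_cast [Nat.cast_sub hQ.one_le]; rfl
  have hE := modEqMatrix_mul_self (pow_pos hQ.pos K) (Nat.totient_prime_pow_succ hQ K)
  rw [hQ1] at hE
  rw [← Real.sqrt_sq (frobNorm_nonneg _), frobNorm_inv_sq,
    conjTranspose_vandermonde_mul_self_of_isPrimitiveRoot hQ hζ hinj,
    inv_smul_sub_of_mul_self hE (by simp [hQ.ne_zero]), trace_smul, trace_add, trace_one,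
    trace_modEqMatrix, Fintype.card_fin, Nat.totient_prime_pow_succ hQ]
  have hQ0 : (Q : ℂ) ≠ 0 := Nat.cast_ne_zero.2 hQ.ne_zero
  congr 1
  rw [show ((Q : ℂ) ^ K * Q)⁻¹ • (((Q ^ K * (Q - 1) : ℕ) : ℂ) + ((Q ^ K * (Q - 1) : ℕ) : ℂ)) =
      ((2 * ((Q : ℝ) - 1) / Q : ℝ) : ℂ) by
    push_cast [smul_eq_mul, Nat.cast_sub hQ.one_le]
    field_simp
    ring, Complex.ofReal_re]

end CyclotomicVandermonde

/-- The exponent `1/6` already suffices: with `y = x - 1`,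
`x ^ 4 - 8 * y ^ 3 = 1 + 4 * y + y ^ 2 * ((y - 2) ^ 2 + 2)`. -/
lemma sqrt_two_mul_sub_one_div_le_rpow {x : ℝ} (hx : 1 ≤ x) :
    √(2 * (x - 1) / x) ≤ x ^ (0.2076 : ℝ) := by
  set w := x ^ ((6 : ℕ)⁻¹ : ℝ) with hw_def
  have hw : w ^ 6 = x := Real.rpow_inv_natCast_pow (by linarith) (by norm_num)
  have hw0 : 0 ≤ w := Real.rpow_nonneg (by linarith) _
  have hy : 0 ≤ 2 * (x - 1) / x := div_nonneg (by linarith) (by linarith)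
  calc √(2 * (x - 1) / x) ≤ w := by
        rw [Real.sqrt_le_left hw0]
        refine (pow_le_pow_iff_left₀ hy (by positivity) (by norm_num : 3 ≠ 0)).1 ?_
        rw [← pow_mul, hw, div_pow, div_le_iff₀ (by positivity)]
        nlinarith [mul_nonneg (sq_nonneg (x - 1)) (sq_nonneg (x - 3))]
    _ ≤ x ^ (0.2076 : ℝ) := by
        rw [hw_def]
        exact Real.rpow_le_rpow_of_exponent_le hx (by norm_num)

lemma condNum_vandermonde_le_of_isPrimitiveRoot {Q K : ℕ} (hQ : Q.Prime) (hK : 1 ≤ K)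
    {ζ : Fin (Q ^ K).totient → ℂ} (hζ : ∀ a, IsPrimitiveRoot (ζ a) (Q ^ K))
    (hinj : Function.Injective ζ) :
    condNum (vandermonde ζ) ≤ (Q ^ K).totient * ((Q ^ K : ℕ) : ℝ) ^ (0.2076 : ℝ) := by
  obtain ⟨K, rfl⟩ := Nat.exists_eq_add_of_le' hK
  have hQ1 : (1 : ℝ) ≤ Q := by exact_mod_cast hQ.one_le
  rw [condNum, frobNorm_vandermonde_of_norm_eq_one
      fun a => Complex.norm_eq_one_of_pow_eq_one (hζ a).pow_eq_one (pow_ne_zero _ hQ.ne_zero),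
    frobNorm_inv_vandermonde_of_isPrimitiveRoot hQ hζ hinj]
  gcongr
  calc √(2 * ((Q : ℝ) - 1) / Q) ≤ (Q : ℝ) ^ (0.2076 : ℝ) := sqrt_two_mul_sub_one_div_le_rpow hQ1
    _ ≤ ((Q ^ (K + 1) : ℕ) : ℝ) ^ (0.2076 : ℝ) := by
        gcongr
        exact_mod_cast Nat.le_self_pow K.succ_ne_zero Q

theorem condNum_TVK_le_rpow_general (s : ℕ) (q k : Fin s → ℕ)
    (hq : ∀ j, Nat.Prime (q j)) (hqinj : Function.Injective q)
    (hk : ∀ j, 1 ≤ k j) (n : ℕ) (hn : n = ∏ j, q j ^ k j)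
    (ζ : ∀ j, Fin (q j ^ k j).totient → ℂ)
    (hζ : ∀ j a, IsPrimitiveRoot (ζ j a) (q j ^ k j))
    (hζinj : ∀ j, Function.Injective (ζ j))
    (r : ℕ) (p : Fin r → ℕ) (hp : ∀ i, Nat.Prime (p i)) :
    condNum ((kronProd fun j =>
          Matrix.of fun a b : Fin (q j ^ k j).totient => ζ j a ^ (b : ℕ)) ⊗ₖ
        kronProd fun i => (Vp (p i)).map Complex.ofReal) ≤
      (n.totient : ℝ) * (n : ℝ) ^ (0.2076 : ℝ) *
        ∏ i, (2 + Real.sqrt (p i)) := by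
  have hcoprime : ((Finset.univ : Finset (Fin s)) : Set (Fin s)).Pairwise fun i j =>
      (q i ^ k i).Coprime (q j ^ k j) :=
    fun i _ j _ hij => Nat.Coprime.pow _ _ <| (Nat.coprime_primes (hq i) (hq j)).2 (hqinj.ne hij)
  change condNum ((kronProd fun j => vandermonde (ζ j)) ⊗ₖ _) ≤ _
  rw [condNum_kronecker,
    condNum_kronProd fun j => isUnit_iff_ne_zero.2 (det_vandermonde_ne_zero_iff.2 (hζinj j)),
    condNum_kronProd fun i => isUnit_det_Vp (hp i).ne_zero]
  have hcyc : ∏ j, condNum (vandermonde (ζ j)) ≤ (n.totient : ℝ) * (n : ℝ) ^ (0.2076 : ℝ) :=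
    calc ∏ j, condNum (vandermonde (ζ j))
        ≤ ∏ j, ((q j ^ k j).totient * ((q j ^ k j : ℕ) : ℝ) ^ (0.2076 : ℝ)) :=
          Finset.prod_le_prod (fun _ _ => condNum_nonneg _) fun j _ =>
            condNum_vandermonde_le_of_isPrimitiveRoot (hq j) (hk j) (hζ j) (hζinj j)
      _ = (n.totient : ℝ) * (n : ℝ) ^ (0.2076 : ℝ) := by
          rw [Finset.prod_mul_distrib, Real.finsetProd_rpow _ _ fun _ _ => by positivity,
            ← Nat.cast_prod, ← Nat.cast_prod, ← Nat.totient_finset_prod _ _ hcoprime, hn]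
  exact mul_le_mul hcyc
    (Finset.prod_le_prod (fun _ _ => condNum_nonneg _) fun i _ => condNum_Vp_le _)
    (Finset.prod_nonneg fun _ _ => condNum_nonneg _) (by positivity)

theorem condNum_TVK_le_rpow (s : ℕ) (q k : Fin s → ℕ)
    (hq : ∀ j, Nat.Prime (q j)) (hqinj : Function.Injective q)
    (hk : ∀ j, 1 ≤ k j) (n : ℕ) (hn2 : Real.exp (Real.exp 1) ≤ (n : ℝ)) (hn : n = ∏ j, q j ^ k j)
    (ζ : ∀ j, Fin (q j ^ k j).totient → ℂ)
    (hζ : ∀ j a, IsPrimitiveRoot (ζ j a) (q j ^ k j))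
    (hζinj : ∀ j, Function.Injective (ζ j))
    (r : ℕ) (p : Fin r → ℕ) (hp : ∀ i, Nat.Prime (p i))
    (hpinj : Function.Injective p) (hpn : ∀ i, ¬ p i ∣ n) :
    condNum ((kronProd fun j =>
          Matrix.of fun a b : Fin (q j ^ k j).totient => ζ j a ^ (b : ℕ)) ⊗ₖ
        kronProd fun i => (Vp (p i)).map Complex.ofReal) ≤
      (n.totient : ℝ) * (n : ℝ) ^ (0.2076 : ℝ) *
        ∏ i, (2 + Real.sqrt (p i)) :=
  condNum_TVK_le_rpow_general s q k hq hqinj hk n hn ζ hζ hζinj r p hp
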